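/- (Theorem 1, Case 2.) Fix an altitude ĥ > 0 and assume X > 0, SIR1(0,ĥ) ≥ SIR2(0,ĥ), Ψˣ(ĥ) ≥ D, and SIR2(D,ĥ) ≥ SIR1(D,ĥ). Then there exists a unique x_sol ∈ [0,D] with SIR1(x_sol,ĥ) = SIR2(x_sol,ĥ), and SIR_S(x,ĥ) ≤ SIR_S(x_sol,ĥ) for every x ∈ [0,D]; that is, the optimal horizontal position is x* = x_sol. -/
import Mathlib


/-- SIR at the UAV located at (x,0,h). -/
noncomputable def SIR1 (pt pM X Y x h : ℝ) : ℝ :=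
  pt * ((x - X) ^ 2 + Y ^ 2 + h ^ 2) / (pM * (x ^ 2 + h ^ 2))

/-- SIR at the Rx when the UAV is located at (x,0,h). -/
noncomputable def SIR2 (pu κ pM D X Y x h : ℝ) : ℝ :=
  pu * κ * (Y ^ 2 + (D - X) ^ 2) / (pM * ((D - x) ^ 2 + h ^ 2))

/-- SIR of the system. -/
noncomputable def SIRS (pt pu κ pM D X Y x h : ℝ) : ℝ :=
  min (SIR1 pt pM X Y x h) (SIR2 pu κ pM D X Y x h)

/-- The horizontal stationary point Ψˣ(h). -/
noncomputable def PsiX (X Y h : ℝ) : ℝ :=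
  (X ^ 2 + Y ^ 2 + Real.sqrt ((X ^ 2 + Y ^ 2) ^ 2 + 4 * X ^ 2 * h ^ 2)) / (2 * X)

lemma key_ineq (X Y h b : ℝ) (hX : 0 < X) (hb : 0 ≤ b)
    (hbd : 2 * X * b ≤ X ^ 2 + Y ^ 2 + Real.sqrt ((X ^ 2 + Y ^ 2) ^ 2 + 4 * X ^ 2 * h ^ 2)) :
    X * b ^ 2 ≤ (X ^ 2 + Y ^ 2) * b + X * h ^ 2 := by
  set S := X ^ 2 + Y ^ 2 with hS
  set Δ := Real.sqrt (S ^ 2 + 4 * X ^ 2 * h ^ 2) with hΔ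
  have hrad : (0:ℝ) ≤ S ^ 2 + 4 * X ^ 2 * h ^ 2 := by positivity
  have hsq : Δ ^ 2 = S ^ 2 + 4 * X ^ 2 * h ^ 2 := Real.sq_sqrt hrad
  have hSΔ : S ≤ Δ := by
    have h2 : Real.sqrt (S ^ 2) ≤ Δ := Real.sqrt_le_sqrt (by nlinarith)
    rw [Real.sqrt_sq_eq_abs] at h2
    exact le_trans (le_abs_self S) h2
  have h3 : 0 ≤ (Δ - (2 * X * b - S)) * (Δ + (2 * X * b - S)) :=
    mul_nonneg (by linarith) (by nlinarith)
  nlinarith [mul_pos hX hX, sq_nonneg (2 * X * b - S), hX.le]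

lemma sir1_anti (pt pM X Y h D : ℝ) (hpt : 0 < pt) (hpM : 0 < pM) (hX : 0 < X) (hh : 0 < h)
    (hΨ : D ≤ PsiX X Y h) {a b : ℝ} (ha : 0 ≤ a) (hab : a < b) (hbD : b ≤ D) :
    SIR1 pt pM X Y b h < SIR1 pt pM X Y a h := by
  have hb0 : 0 ≤ b := le_of_lt (lt_of_le_of_lt ha hab)
  have hbd : 2 * X * b ≤ X ^ 2 + Y ^ 2 + Real.sqrt ((X ^ 2 + Y ^ 2) ^ 2 + 4 * X ^ 2 * h ^ 2) := by
    unfold PsiX at hΨ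
    have h2X : (0:ℝ) < 2 * X := by linarith
    have := (le_div_iff₀ h2X).mp hΨ
    nlinarith
  have hkey := key_ineq X Y h b hX hb0 hbd
  have hE : 0 < (X ^ 2 + Y ^ 2) * (a + b) - 2 * X * a * b + 2 * X * h ^ 2 := by
    rcases le_or_gt (2 * X * b) (X ^ 2 + Y ^ 2) with hc | hc
    · nlinarith [mul_nonneg ha (sub_nonneg.2 hc), mul_pos hX (mul_pos hh hh),
        mul_nonneg (by positivity : (0:ℝ) ≤ X ^ 2 + Y ^ 2) hb0]
    · nlinarith [mul_lt_mul_of_neg_right hab (show X ^ 2 + Y ^ 2 - 2 * X * b < 0 by linarith)]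
  unfold SIR1
  have hda : 0 < pM * (a ^ 2 + h ^ 2) := by positivity
  have hdb : 0 < pM * (b ^ 2 + h ^ 2) := by positivity
  rw [div_lt_div_iff₀ hdb hda]
  nlinarith [mul_pos (mul_pos hpt hpM)
    (mul_pos (show (0:ℝ) < b - a by linarith) hE)]

lemma sir2_mono (pu κ pM D X Y h : ℝ) (hpM : 0 < pM) (hh : 0 < h)
    (hC : 0 ≤ pu * κ * (Y ^ 2 + (D - X) ^ 2)) {a b : ℝ} (hab : a ≤ b) (hbD : b ≤ D) :
    SIR2 pu κ pM D X Y a h ≤ SIR2 pu κ pM D X Y b h := by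
  unfold SIR2
  have h1 : 0 < pM * ((D - b) ^ 2 + h ^ 2) := by positivity
  have h2 : pM * ((D - b) ^ 2 + h ^ 2) ≤ pM * ((D - a) ^ 2 + h ^ 2) := by nlinarith [mul_nonneg (sub_nonneg.2 hab) (show (0:ℝ) ≤ 2 * D - a - b by linarith), hpM.le, mul_nonneg hpM.le (mul_nonneg (sub_nonneg.2 hab) (show (0:ℝ) ≤ 2 * D - a - b by linarith))]
  exact div_le_div_of_nonneg_left hC h1 h2

theorem stmt7 (D X Y pt pu pM κ : ℝ) (hD : 0 < D) (hX0 : 0 ≤ X) (hXD : X ≤ D)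
    (hpt : 0 < pt) (hpu : 0 < pu) (hpM : 0 < pM) (hκ : 0 < κ)
    (hhat : ℝ) (hhat_pos : 0 < hhat) (hX : 0 < X)
    (hc1 : SIR1 pt pM X Y 0 hhat ≥ SIR2 pu κ pM D X Y 0 hhat)
    (hc2 : PsiX X Y hhat ≥ D)
    (hc3 : SIR2 pu κ pM D X Y D hhat ≥ SIR1 pt pM X Y D hhat) :
    ∃ xsol ∈ Set.Icc (0 : ℝ) D,
      SIR1 pt pM X Y xsol hhat = SIR2 pu κ pM D X Y xsol hhat ∧
      (∀ x ∈ Set.Icc (0 : ℝ) D,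
        SIR1 pt pM X Y x hhat = SIR2 pu κ pM D X Y x hhat → x = xsol) ∧
      (∀ x ∈ Set.Icc (0 : ℝ) D,
        SIRS pt pu κ pM D X Y x hhat ≤ SIRS pt pu κ pM D X Y xsol hhat) := by
  have hC : 0 ≤ pu * κ * (Y ^ 2 + (D - X) ^ 2) := by positivity
  set F : ℝ → ℝ := fun x => SIR1 pt pM X Y x hhat - SIR2 pu κ pM D X Y x hhat with hF
  have hcont : Continuous F := by
    unfold F
    unfold SIR1 SIR2
    apply Continuous.sub
    · exact Continuous.div (by continuity) (by continuity) (fun x => by positivity)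
    · exact Continuous.div (by continuity) (by continuity) (fun x => by positivity)
  have hivt := intermediate_value_Icc' hD.le hcont.continuousOn
  have h0mem : (0:ℝ) ∈ Set.Icc (F D) (F 0) := by
    constructor
    · simp only [hF]; linarith [hc3]
    · simp only [hF]; linarith [hc1]
  obtain ⟨xsol, hxs, hFx⟩ := hivt h0mem
  have heq : SIR1 pt pM X Y xsol hhat = SIR2 pu κ pM D X Y xsol hhat := by
    have : F xsol = 0 := hFx
    simpa [hF, sub_eq_zero] using this
  refine ⟨xsol, hxs, heq, ?_, ?_⟩
  · intro x hx hxeq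
    by_contra hne
    rcases lt_or_gt_of_ne hne with hlt | hlt
    · have h1 := sir1_anti pt pM X Y hhat D hpt hpM hX hhat_pos hc2 hx.1 hlt hxs.2
      have h2 := sir2_mono pu κ pM D X Y hhat hpM hhat_pos hC hlt.le hxs.2
      linarith
    · have h1 := sir1_anti pt pM X Y hhat D hpt hpM hX hhat_pos hc2 hxs.1 hlt hx.2
      have h2 := sir2_mono pu κ pM D X Y hhat hpM hhat_pos hC hlt.le hx.2
      linarith
  · intro x hx
    have hSxs : SIRS pt pu κ pM D X Y xsol hhat = SIR2 pu κ pM D X Y xsol hhat := by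
      unfold SIRS; rw [heq, min_self]
    rcases le_total x xsol with hle | hle
    · calc SIRS pt pu κ pM D X Y x hhat ≤ SIR2 pu κ pM D X Y x hhat := min_le_right _ _
        _ ≤ SIR2 pu κ pM D X Y xsol hhat := sir2_mono pu κ pM D X Y hhat hpM hhat_pos hC hle hxs.2
        _ = SIRS pt pu κ pM D X Y xsol hhat := hSxs.symm
    · have h1 : SIR1 pt pM X Y x hhat ≤ SIR1 pt pM X Y xsol hhat := by
        rcases eq_or_lt_of_le hle with heq' | hlt
        · rw [heq']
        · exact (sir1_anti pt pM X Y hhat D hpt hpM hX hhat_pos hc2 hxs.1 hlt hx.2).le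
      calc SIRS pt pu κ pM D X Y x hhat ≤ SIR1 pt pM X Y x hhat := min_le_left _ _
        _ ≤ SIR1 pt pM X Y xsol hhat := h1
        _ = SIR2 pu κ pM D X Y xsol hhat := heq
        _ = SIRS pt pu κ pM D X Y xsol hhat := hSxs.symm
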